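/- For each 3CNF boolean formula Φ with m conjuncts: Φ is satisfiable if and only if there exists a set of literals S(Φ) ⊆ W(Φ) such that (D(Φ), W(Φ)_{S(Φ)}) ⊨ ¬(S(Φ) ∪ {c₁,…,c_m}), where (D(Φ),W(Φ)) is the NU default theory associated with Φ described in the context. -/

import Mathlib

/-! Propositional formulas -/

inductive Form (V : Type) : Type
  | atom : V → Form V
  | tru  : Form V
  | fals : Form V
  | neg  : Form V → Form V
  | conj : Form V → Form V → Form V
  | disj : Form V → Form V → Form V

/-- Satisfaction of a formula by a valuation. -/
def Form.sat {V : Type} (v : V → Prop) : Form V → Prop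
  | .atom a => v a
  | .tru => True
  | .fals => False
  | .neg φ => ¬ Form.sat v φ
  | .conj φ ψ => Form.sat v φ ∧ Form.sat v ψ
  | .disj φ ψ => Form.sat v φ ∨ Form.sat v ψ

/-- Logical logClosure `T*` of a set of formulas. -/
def logClosure {V : Type} (T : Set (Form V)) : Set (Form V) :=
  { φ | ∀ v : V → Prop, (∀ ψ ∈ T, Form.sat v ψ) → Form.sat v φ }

/-- A default rule `α : β₁,…,β_m / γ` (`pre = none` means the prerequisite is missing). -/
structure Default (V : Type) : Type where
  pre   : Option (Form V)
  justs : List (Form V)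
  concl : Form V

/-- The stage sets `E_i` relative to a candidate extension `E`:
`E_0 = W`, `E_{i+1} = E_i* ∪ {γ | α:β₁,…,β_m/γ ∈ D, α ∈ E_i, ¬β₁ ∉ E, …, ¬β_m ∉ E}`. -/
def extStage {V : Type} (D : Set (Default V)) (W : Set (Form V)) (E : Set (Form V)) :
    ℕ → Set (Form V)
  | 0 => W
  | i + 1 =>
      logClosure (extStage D W E i) ∪
        { φ | ∃ d ∈ D, d.concl = φ ∧ (∀ a ∈ d.pre, a ∈ extStage D W E i) ∧
              ∀ b ∈ d.justs, Form.neg b ∉ E }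

/-- `E` is an extension of the default theory `(D, W)`. -/
def IsExtension {V : Type} (D : Set (Default V)) (W : Set (Form V)) (E : Set (Form V)) : Prop :=
  E = ⋃ i, extStage D W E i

/-- `(D, W) ⊨ φ`: every extension of `(D, W)` contains `φ`. -/
def entails {V : Type} (D : Set (Default V)) (W : Set (Form V)) (φ : Form V) : Prop :=
  ∀ E, IsExtension D W E → φ ∈ E

/-! Literals -/

/-- A literal: a letter together with a sign (`pos = true` means a positive literal). -/
structure Lit (V : Type) : Type where
  letter : V
  pos : Bool

/-- The formula corresponding to a literal. -/
def Lit.toForm {V : Type} (l : Lit V) : Form V :=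
  if l.pos then Form.atom l.letter else Form.neg (Form.atom l.letter)

/-- Negation of a literal (so that `¬¬a = a`). -/
def Lit.negate {V : Type} (l : Lit V) : Lit V := ⟨l.letter, !l.pos⟩

/-- A set of literals is consistent if it contains no complementary pair. -/
def LitConsistent {V : Type} (S : Set (Lit V)) : Prop := ∀ l ∈ S, l.negate ∉ S

/-! Normal mixed unary (NMU) default theories -/

/-- An NMU default `α : β / β` with `α` empty or a single literal and `β` a single literal. -/
structure NMUDefault (V : Type) : Type where
  pre : Option (Lit V)
  concl : Lit V

/-- The general default rule corresponding to an NMU default. -/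
def NMUDefault.toDefault {V : Type} (d : NMUDefault V) : Default V :=
  ⟨d.pre.map Lit.toForm, [d.concl.toForm], d.concl.toForm⟩

/-- `E` is an extension of the NMU theory `(D, W)`. -/
def NMU.IsExtension {V : Type} (D : Set (NMUDefault V)) (W : Set (Lit V))
    (E : Set (Form V)) : Prop :=
  _root_.IsExtension (NMUDefault.toDefault '' D) (Lit.toForm '' W) E

/-- The NMU theory `(D, W)` entails the literal `l`. -/
def NMU.entails {V : Type} (D : Set (NMUDefault V)) (W : Set (Lit V)) (l : Lit V) : Prop :=
  _root_.entails (NMUDefault.toDefault '' D) (Lit.toForm '' W) l.toForm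

/-- An NMU theory is normal unary (NU) if every nonempty prerequisite is positive. -/
def IsNU {V : Type} (D : Set (NMUDefault V)) : Prop :=
  ∀ d ∈ D, ∀ p ∈ d.pre, p.pos = true

/-! Atomic dependency graph -/

/-- Edge `(x, y)` of the atomic dependency graph: `x` occurs in the prerequisite and `y`
in the consequent of some default of `D`. -/
def depEdge {V : Type} (D : Set (NMUDefault V)) (x y : V) : Prop :=
  ∃ d ∈ D, (∃ p ∈ d.pre, p.letter = x) ∧ d.concl.letter = y

/-- There is a path from `x` to `y` in the atomic dependency graph. -/
def depReach {V : Type} (D : Set (NMUDefault V)) : V → V → Prop :=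
  Relation.ReflTransGen (depEdge D)

/-- A set of literals `S` influences a literal `l`. -/
def influences {V : Type} (D : Set (NMUDefault V)) (S : Set (Lit V)) (l : Lit V) : Prop :=
  ∃ t ∈ S, depReach D t.letter l.letter

/-- A 3CNF formula over variables `Fin n` with `m` conjuncts is represented by the
function giving the `k`-th literal of the `j`-th clause. -/
def Sat3 {n m : ℕ} (Φ : Fin m → Fin 3 → Lit (Fin n)) : Prop :=
  ∃ τ : Fin n → Bool, ∀ j : Fin m, ∃ k : Fin 3, τ (Φ j k).letter = (Φ j k).pos

/-- The letters of the theory associated with a 3CNF `Φ`: the variables `xᵢ`,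
the fresh letters `yᵢ` and the fresh letters `c_j`. -/
inductive PhiVar (n m : ℕ) : Type
  | X : Fin n → PhiVar n m
  | Y : Fin n → PhiVar n m
  | C : Fin m → PhiVar n m

/-- `σ(xᵢ) = xᵢ` and `σ(¬xᵢ) = yᵢ`. -/
def sigmaMap {n m : ℕ} (t : Lit (Fin n)) : Lit (PhiVar n m) :=
  if t.pos then ⟨PhiVar.X t.letter, true⟩ else ⟨PhiVar.Y t.letter, true⟩

/-- The defaults `D(Φ) = D₁ ∪ D₂ ∪ D₃`, where
`D₁ = {xᵢ:¬yᵢ/¬yᵢ, :yᵢ/yᵢ}`, `D₂ = {σ(t_{j,k}):¬c_j/¬c_j}` and `D₃ = {:¬xᵢ/¬xᵢ}`. -/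
def DPhi {n m : ℕ} (Φ : Fin m → Fin 3 → Lit (Fin n)) : Set (NMUDefault (PhiVar n m)) :=
  { d | (∃ i, d = ⟨some ⟨PhiVar.X i, true⟩, ⟨PhiVar.Y i, false⟩⟩) ∨
        (∃ i, d = ⟨none, ⟨PhiVar.Y i, true⟩⟩) ∨
        (∃ j k, d = ⟨some (sigmaMap (Φ j k)), ⟨PhiVar.C j, false⟩⟩) ∨
        (∃ i, d = ⟨none, ⟨PhiVar.X i, false⟩⟩) }

/-- `W(Φ) = {x₁, …, xₙ}`. -/
def WPhi (n m : ℕ) : Set (Lit (PhiVar n m)) := { l | ∃ i, l = ⟨PhiVar.X i, true⟩ }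

/-!
If `τ` satisfies `Φ`, remove from `W(Φ)` the variables that `τ` makes false. In every
extension, `:¬xᵢ/¬xᵢ` then yields `¬xᵢ` for each removed `xᵢ`, `:yᵢ/yᵢ` yields `yᵢ`, and a true
literal of clause `j` fires `σ(t):¬c_j/¬c_j`; none of these defaults is blocked, because
every extension is satisfied by a valuation making all `c_j` false and `yᵢ` true for the
removed `xᵢ`. Conversely, for any `S ⊆ W(Φ)` the closure of the consistent set of literals
`xᵢ` or `¬xᵢ` (as `xᵢ ∉ S` or `xᵢ ∈ S`), the opposite literal on `yᵢ`, and `¬c_j` for the clauses satisfied by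
that assignment is an extension, so entailing every `¬c_j` forces the assignment to satisfy `Φ`.
-/

section DefaultLogic

variable {V : Type}

theorem subset_logClosure (T : Set (Form V)) : T ⊆ logClosure T :=
  fun φ hφ _ hv => hv φ hφ

theorem logClosure_mono {T T' : Set (Form V)} (h : T ⊆ T') : logClosure T ⊆ logClosure T' :=
  fun _ hφ v hv => hφ v fun ψ hψ => hv ψ (h hψ)

theorem logClosure_logClosure_subset (T : Set (Form V)) :
    logClosure (logClosure T) ⊆ logClosure T :=
  fun _ hφ v hv => hφ v fun _ hψ => hψ v hv

variable {D : Set (Default V)} {W E : Set (Form V)}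

theorem extStage_mono : Monotone (extStage D W E) :=
  monotone_nat_of_le_succ fun _ _ hφ => Or.inl (subset_logClosure _ hφ)

theorem IsExtension.extStage_subset (hE : IsExtension D W E) (s : ℕ) :
    extStage D W E s ⊆ E := by
  intro φ hφ
  rw [hE]
  exact Set.mem_iUnion.2 ⟨s, hφ⟩

theorem IsExtension.sat_of_mem (hE : IsExtension D W E) {v : V → Prop}
    (hW : ∀ φ ∈ W, Form.sat v φ)
    (hD : ∀ d ∈ D, (∀ a ∈ d.pre, Form.sat v a) → (∀ b ∈ d.justs, Form.neg b ∉ E) →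
      d.concl ∈ E → Form.sat v d.concl) :
    ∀ φ ∈ E, Form.sat v φ := by
  have hstage : ∀ s, ∀ φ ∈ extStage D W E s, Form.sat v φ := by
    intro s
    induction s with
    | zero => exact hW
    | succ s ih =>
      rintro φ (hφ | hfired)
      · exact hφ v ih
      · obtain ⟨d, hd, rfl, hpre, hjust⟩ := hfired
        exact hD d hd (fun a ha => ih a (hpre a ha)) hjust
          (hE.extStage_subset (s + 1) (Or.inr ⟨d, hd, rfl, hpre, hjust⟩))
  intro φ hφ
  rw [hE] at hφ
  obtain ⟨s, hs⟩ := Set.mem_iUnion.1 hφ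
  exact hstage s φ hs

theorem isExtension_of_subset_extStage (N : ℕ) (hcl : logClosure E ⊆ E)
    (hN : E ⊆ extStage D W E N) (hW : W ⊆ E)
    (hD : ∀ d ∈ D, (∀ a ∈ d.pre, a ∈ E) → (∀ b ∈ d.justs, Form.neg b ∉ E) → d.concl ∈ E) :
    IsExtension D W E := by
  have hstage : ∀ s, extStage D W E s ⊆ E := by
    intro s
    induction s with
    | zero => exact hW
    | succ s ih =>
      rintro φ (hφ | ⟨d, hd, rfl, hpre, hjust⟩)
      · exact hcl (logClosure_mono ih hφ)
      · exact hD d hd (fun a ha => ih (hpre a ha)) hjust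
  exact (hN.trans (Set.subset_iUnion _ N)).antisymm (Set.iUnion_subset hstage)

end DefaultLogic

section Literals

variable {V : Type}

@[simp]
theorem Lit.sat_toForm (v : V → Prop) (l : Lit V) :
    Form.sat v l.toForm ↔ (v l.letter ↔ l.pos = true) := by
  rcases l with ⟨a, _ | _⟩ <;> simp [Lit.toForm, Form.sat]

theorem Lit.sat_neg_toForm (v : V → Prop) (l : Lit V) :
    Form.sat v (Form.neg l.toForm) ↔ Form.sat v l.negate.toForm := by
  rcases l with ⟨a, _ | _⟩ <;> simp [Form.sat, Lit.negate]

theorem Lit.toForm_mem_logClosure_iff {G : Set (Lit V)} (hG : LitConsistent G) {l : Lit V} :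
    l.toForm ∈ logClosure (Lit.toForm '' G) ↔ l ∈ G := by
  refine ⟨fun hl => ?_, fun hl => subset_logClosure _ ⟨l, hl, rfl⟩⟩
  by_contra hlG
  -- a model of `G` falsifying `l`
  let v : V → Prop := fun a => ⟨a, true⟩ ∈ G ∨ (⟨a, false⟩ ∉ G ∧ l = ⟨a, false⟩)
  have hvG : ∀ ψ ∈ Lit.toForm '' G, Form.sat v ψ := by
    rintro _ ⟨⟨a, _ | _⟩, ha, rfl⟩
    · have : (⟨a, true⟩ : Lit V) ∉ G := hG _ ha
      simp_all [v]
    · simp [v, ha]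
  rcases l with ⟨a, _ | _⟩ <;> simpa [v, hlG] using hl v hvG

theorem Lit.neg_toForm_mem_logClosure_iff {G : Set (Lit V)} (hG : LitConsistent G)
    {l : Lit V} : Form.neg l.toForm ∈ logClosure (Lit.toForm '' G) ↔ l.negate ∈ G := by
  rw [← Lit.toForm_mem_logClosure_iff hG]
  simp only [logClosure, Set.mem_ofPred_eq, Lit.sat_neg_toForm]

end Literals

namespace NMU

variable {V : Type} {D : Set (NMUDefault V)} {W : Set (Lit V)} {E : Set (Form V)}

theorem concl_mem_extStage_succ {d : NMUDefault V} (hd : d ∈ D) {s : ℕ}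
    (hpre : ∀ p ∈ d.pre,
      p.toForm ∈ extStage (NMUDefault.toDefault '' D) (Lit.toForm '' W) E s)
    (hjust : Form.neg d.concl.toForm ∉ E) :
    d.concl.toForm ∈ extStage (NMUDefault.toDefault '' D) (Lit.toForm '' W) E (s + 1) :=
  Or.inr ⟨d.toDefault, ⟨d, hd, rfl⟩, rfl, by simpa [NMUDefault.toDefault] using hpre,
    by simpa [NMUDefault.toDefault] using hjust⟩

theorem IsExtension.sat_of_mem (hE : NMU.IsExtension D W E) {v : V → Prop}
    (hW : ∀ l ∈ W, Form.sat v l.toForm)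
    (hD : ∀ d ∈ D, (∀ p ∈ d.pre, Form.sat v p.toForm) → Form.neg d.concl.toForm ∉ E →
      d.concl.toForm ∈ E → Form.sat v d.concl.toForm) :
    ∀ φ ∈ E, Form.sat v φ := by
  refine _root_.IsExtension.sat_of_mem hE (by rintro _ ⟨l, hl, rfl⟩; exact hW l hl) ?_
  rintro _ ⟨d, hd, rfl⟩ hpre hjust hconcl
  exact hD d hd (by simpa [NMUDefault.toDefault] using hpre)
    (by simpa [NMUDefault.toDefault] using hjust) hconcl

theorem isExtension_logClosure {G : Set (Lit V)} (hG : LitConsistent G) (N : ℕ)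
    (hN : ∀ l ∈ G, l.toForm ∈
      extStage (NMUDefault.toDefault '' D) (Lit.toForm '' W) (logClosure (Lit.toForm '' G)) N)
    (hW : W ⊆ G) (hD : ∀ d ∈ D, (∀ p ∈ d.pre, p ∈ G) → d.concl.negate ∉ G → d.concl ∈ G) :
    NMU.IsExtension D W (logClosure (Lit.toForm '' G)) := by
  refine isExtension_of_subset_extStage (N + 1) (logClosure_logClosure_subset _)
    (fun φ hφ => Or.inl (logClosure_mono ?_ hφ)) ?_ ?_
  · rintro _ ⟨l, hl, rfl⟩
    exact hN l hl
  · rintro _ ⟨l, hl, rfl⟩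
    exact subset_logClosure _ ⟨l, hW hl, rfl⟩
  · rintro _ ⟨d, hd, rfl⟩ hpre hjust
    simp only [NMUDefault.toDefault, Option.mem_def, Option.map_eq_some_iff,
      List.mem_singleton, forall_eq] at hpre hjust ⊢
    rw [Lit.neg_toForm_mem_logClosure_iff hG] at hjust
    rw [Lit.toForm_mem_logClosure_iff hG]
    refine hD d hd (fun p hp => ?_) hjust
    rw [← Lit.toForm_mem_logClosure_iff hG]
    exact hpre _ ⟨p, hp, rfl⟩

end NMU

section Reduction

variable {n m : ℕ} (Φ : Fin m → Fin 3 → Lit (Fin n)) (τ : Fin n → Bool)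

def clauseSat (j : Fin m) : Prop :=
  ∃ k, τ (Φ j k).letter = (Φ j k).pos

/-- The witness `S(Φ)` for an assignment `τ`. -/
def falseVars : Set (Lit (PhiVar n m)) :=
  { l | ∃ i, τ i = false ∧ l = ⟨PhiVar.X i, true⟩ }

variable {Φ τ}

theorem falseVars_subset_WPhi : falseVars τ ⊆ WPhi n m := by
  rintro _ ⟨i, -, rfl⟩
  exact ⟨i, rfl⟩

theorem exists_eq_falseVars_of_subset_WPhi {S : Set (Lit (PhiVar n m))} (hS : S ⊆ WPhi n m) :
    ∃ τ : Fin n → Bool, S = falseVars τ := by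
  classical
  refine ⟨fun i => decide ((⟨PhiVar.X i, true⟩ : Lit (PhiVar n m)) ∉ S), ?_⟩
  ext l
  constructor
  · intro hl
    obtain ⟨i, rfl⟩ := hS hl
    exact ⟨i, by simpa using hl, rfl⟩
  · rintro ⟨i, hi, rfl⟩
    simpa using hi

theorem mem_WPhi_diff_falseVars {l : Lit (PhiVar n m)} :
    l ∈ WPhi n m \ falseVars τ ↔ ∃ i, τ i = true ∧ l = ⟨PhiVar.X i, true⟩ := by
  constructor
  · rintro ⟨⟨i, rfl⟩, hl⟩
    exact ⟨i, by simpa [falseVars] using hl, rfl⟩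
  · rintro ⟨i, hi, rfl⟩
    exact ⟨⟨i, rfl⟩, by simp [falseVars, hi]⟩

theorem negClause_mem_extStage_two {E : Set (Form (PhiVar n m))} {j : Fin m}
    (hY : ∀ i, τ i = false → Form.neg (Form.atom (PhiVar.Y i)) ∉ E)
    (hC : Form.neg (Form.neg (Form.atom (PhiVar.C j))) ∉ E) (hj : clauseSat Φ τ j) :
    (⟨PhiVar.C j, false⟩ : Lit (PhiVar n m)).toForm ∈
      extStage (NMUDefault.toDefault '' DPhi Φ) (Lit.toForm '' (WPhi n m \ falseVars τ)) E 2 := by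
  obtain ⟨k, hk⟩ := hj
  have hσ : (sigmaMap (Φ j k) : Lit (PhiVar n m)).toForm ∈
      extStage (NMUDefault.toDefault '' DPhi Φ) (Lit.toForm '' (WPhi n m \ falseVars τ)) E 1 := by
    rcases hpos : (Φ j k).pos
    · rw [hpos] at hk
      simp only [sigmaMap, hpos]
      exact NMU.concl_mem_extStage_succ (d := ⟨none, ⟨PhiVar.Y (Φ j k).letter, true⟩⟩)
        (Or.inr (Or.inl ⟨_, rfl⟩)) (by simp)
        (by simpa [Lit.toForm] using hY _ hk)
    · rw [hpos] at hk
      simp only [sigmaMap, hpos]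
      exact extStage_mono zero_le_one ⟨_, mem_WPhi_diff_falseVars.2 ⟨_, hk, rfl⟩, rfl⟩
  exact NMU.concl_mem_extStage_succ (d := ⟨some (sigmaMap (Φ j k)), ⟨PhiVar.C j, false⟩⟩)
    (Or.inr (Or.inr (Or.inl ⟨j, k, rfl⟩))) (by simpa using hσ)
    (by simpa [Lit.toForm] using hC)

variable (τ) in
/-- A valuation satisfying a given extension `E` of `(D(Φ), W(Φ) \ S(τ))`. When `τ xᵢ` holds,
`E` may contain either `yᵢ` or `¬yᵢ`, so `yᵢ` is read off `E`. -/
def extensionVal (E : Set (Form (PhiVar n m))) : PhiVar n m → Prop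
  | .X i => τ i = true
  | .Y i => τ i = false ∨ Form.neg (Form.atom (PhiVar.Y i)) ∉ E
  | .C _ => False

theorem sat_extensionVal {E : Set (Form (PhiVar n m))}
    (hE : NMU.IsExtension (DPhi Φ) (WPhi n m \ falseVars τ) E) :
    ∀ φ ∈ E, Form.sat (extensionVal τ E) φ := by
  refine NMU.IsExtension.sat_of_mem hE ?_ ?_
  · intro l hl
    obtain ⟨i, hi, rfl⟩ := mem_WPhi_diff_falseVars.1 hl
    simp [extensionVal, hi]
  · rintro d (⟨i, rfl⟩ | ⟨i, rfl⟩ | ⟨j, k, rfl⟩ | ⟨i, rfl⟩) hpre hjust hconcl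
    · simp_all [extensionVal, Lit.toForm, Form.sat]
    · simp_all [extensionVal, Lit.toForm, Form.sat]
    · simp [extensionVal]
    · have hx : τ i ≠ true := by
        intro hi
        refine hjust (hE.extStage_subset 1 (Or.inl fun v hv => ?_))
        have := hv _ ⟨_, mem_WPhi_diff_falseVars.2 ⟨i, hi, rfl⟩, rfl⟩
        simpa [Lit.toForm, Form.sat] using this
      simpa [extensionVal] using hx

theorem entails_negate_of_mem_falseVars {l : Lit (PhiVar n m)} (hl : l ∈ falseVars τ) :
    NMU.entails (DPhi Φ) (WPhi n m \ falseVars τ) l.negate := by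
  obtain ⟨i, hi, rfl⟩ := hl
  intro E hE
  refine hE.extStage_subset 1 (NMU.concl_mem_extStage_succ (s := 0)
    (d := ⟨none, ⟨PhiVar.X i, false⟩⟩) (Or.inr (Or.inr (Or.inr ⟨i, rfl⟩))) (by simp) ?_)
  intro h
  simpa [Lit.toForm, Form.sat, extensionVal, hi] using sat_extensionVal hE _ h

theorem entails_negClause_of_clauseSat {j : Fin m} (hj : clauseSat Φ τ j) :
    NMU.entails (DPhi Φ) (WPhi n m \ falseVars τ) (Lit.negate ⟨PhiVar.C j, true⟩) := by
  intro E hE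
  have hv := sat_extensionVal hE
  refine hE.extStage_subset 2 (negClause_mem_extStage_two (fun i hi h => ?_) (fun h => ?_) hj)
  · simpa [Form.sat, extensionVal, hi] using hv _ h
  · simpa [Form.sat, extensionVal] using hv _ h

variable (Φ τ)

/-- The literals of the extension of `(D(Φ), W(Φ) \ S(τ))` in which `yᵢ ↔ ¬xᵢ`. -/
def canonLit : Lit (PhiVar n m) → Prop
  | ⟨.X i, b⟩ => τ i = b
  | ⟨.Y i, b⟩ => τ i = !b
  | ⟨.C j, b⟩ => b = false ∧ clauseSat Φ τ j

theorem litConsistent_canonLit : LitConsistent {l | canonLit Φ τ l} := by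
  rintro ⟨i | i | j, _ | _⟩ <;> simp_all [canonLit, Lit.negate]

variable {Φ τ}

theorem canonLit_sigmaMap (t : Lit (Fin n)) :
    canonLit Φ τ (sigmaMap t) ↔ τ t.letter = t.pos := by
  rcases t with ⟨i, _ | _⟩ <;> simp [sigmaMap, canonLit]

theorem canonLit_toForm_mem_extStage_two {l : Lit (PhiVar n m)} (hl : canonLit Φ τ l) :
    l.toForm ∈ extStage (NMUDefault.toDefault '' DPhi Φ) (Lit.toForm '' (WPhi n m \ falseVars τ))
      (logClosure (Lit.toForm '' {l | canonLit Φ τ l})) 2 := by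
  have hnot : ∀ l : Lit (PhiVar n m), ¬ canonLit Φ τ l.negate →
      Form.neg l.toForm ∉ logClosure (Lit.toForm '' {l | canonLit Φ τ l}) := fun l hl => by
    rwa [Lit.neg_toForm_mem_logClosure_iff (litConsistent_canonLit Φ τ)]
  have hx : ∀ i, τ i = true → (⟨PhiVar.X i, true⟩ : Lit (PhiVar n m)).toForm ∈
      extStage (NMUDefault.toDefault '' DPhi Φ) (Lit.toForm '' (WPhi n m \ falseVars τ))
        (logClosure (Lit.toForm '' {l | canonLit Φ τ l})) 0 :=
    fun i hi => ⟨_, mem_WPhi_diff_falseVars.2 ⟨i, hi, rfl⟩, rfl⟩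
  rcases l with ⟨i | i | j, _ | _⟩ <;> simp only [canonLit] at hl
  · exact extStage_mono one_le_two (NMU.concl_mem_extStage_succ
      (d := ⟨none, ⟨PhiVar.X i, false⟩⟩) (Or.inr (Or.inr (Or.inr ⟨i, rfl⟩))) (by simp)
      (hnot _ (by simp [canonLit, Lit.negate, hl])))
  · exact extStage_mono zero_le_two (hx i hl)
  · exact extStage_mono one_le_two (NMU.concl_mem_extStage_succ
      (d := ⟨some ⟨PhiVar.X i, true⟩, ⟨PhiVar.Y i, false⟩⟩) (Or.inl ⟨i, rfl⟩)
      (by simpa using hx i hl) (hnot _ (by simp [canonLit, Lit.negate, hl])))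
  · exact extStage_mono one_le_two (NMU.concl_mem_extStage_succ
      (d := ⟨none, ⟨PhiVar.Y i, true⟩⟩) (Or.inr (Or.inl ⟨i, rfl⟩)) (by simp)
      (hnot _ (by simp [canonLit, Lit.negate, hl])))
  · exact negClause_mem_extStage_two
      (fun i hi => hnot ⟨PhiVar.Y i, true⟩ (by simp [canonLit, Lit.negate, hi]))
      (hnot ⟨PhiVar.C j, false⟩ (by simp [canonLit, Lit.negate])) hl.2
  · exact absurd hl.1 (by decide)

variable (Φ τ)

theorem isExtension_logClosure_canonLit :
    NMU.IsExtension (DPhi Φ) (WPhi n m \ falseVars τ)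
      (logClosure (Lit.toForm '' {l | canonLit Φ τ l})) := by
  refine NMU.isExtension_logClosure (litConsistent_canonLit Φ τ) 2
    (fun l hl => canonLit_toForm_mem_extStage_two hl) ?_ ?_
  · intro l hl
    obtain ⟨i, hi, rfl⟩ := mem_WPhi_diff_falseVars.1 hl
    exact hi
  · rintro d (⟨i, rfl⟩ | ⟨i, rfl⟩ | ⟨j, k, rfl⟩ | ⟨i, rfl⟩) hpre hjust
    · simpa [canonLit] using hpre
    · simpa [canonLit, Lit.negate] using hjust
    · exact ⟨rfl, k, (canonLit_sigmaMap _).1 (hpre _ rfl)⟩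
    · simpa [canonLit, Lit.negate] using hjust

variable {Φ τ}

theorem clauseSat_of_entails_negClause {j : Fin m}
    (h : NMU.entails (DPhi Φ) (WPhi n m \ falseVars τ) (Lit.negate ⟨PhiVar.C j, true⟩)) :
    clauseSat Φ τ j := by
  have hmem := h _ (isExtension_logClosure_canonLit Φ τ)
  rw [Lit.toForm_mem_logClosure_iff (litConsistent_canonLit Φ τ)] at hmem
  exact hmem.2

end Reduction

/-- Lemma: `Φ` is satisfiable iff there is a set of literals `S(Φ) ⊆ W(Φ)` such that
`(D(Φ), W(Φ)_{S(Φ)}) ⊨ ¬(S(Φ) ∪ {c₁, …, c_m})`. -/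
theorem sat_iff_witness_entailment {n m : ℕ} (Φ : Fin m → Fin 3 → Lit (Fin n)) :
    Sat3 Φ ↔
      ∃ S : Set (Lit (PhiVar n m)), S ⊆ WPhi n m ∧
        ∀ l ∈ S ∪ { l : Lit (PhiVar n m) | ∃ j, l = ⟨PhiVar.C j, true⟩ },
          NMU.entails (DPhi Φ) (WPhi n m \ S) l.negate := by
  constructor
  · rintro ⟨τ, hτ⟩
    refine ⟨falseVars τ, falseVars_subset_WPhi, ?_⟩
    rintro l (hl | ⟨j, rfl⟩)
    · exact entails_negate_of_mem_falseVars hl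
    · exact entails_negClause_of_clauseSat (hτ j)
  · rintro ⟨S, hS, hent⟩
    obtain ⟨τ, rfl⟩ := exists_eq_falseVars_of_subset_WPhi hS
    exact ⟨τ, fun j => clauseSat_of_entails_negClause (hent _ (Or.inr ⟨j, rfl⟩))⟩
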